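/- Let m ∈ (−1,1) with m ∉ {−1/2, 1/2}, let κ̃ ∈ ℝ, and let Λ₀ > 0. Let ψ ∈ L²((0,∞)) satisfy ψ(p) = p^{−3/2−m} + κ̃ p^{−3/2+m} for all p ≥ Λ₀ and the normalization ∫₀^{Λ₀} q ψ(q) dq = Λ₀^{1/2−m}/(1/2 − m) + κ̃ Λ₀^{1/2+m}/(1/2 + m). Define f_Λ := −[ (1/2 − m) Λ^{−m} + κ̃ (1/2 + m) Λ^{m} ] / [ (1/2 − m)^{−1} Λ^{−m} + κ̃ (1/2 + m)^{−1} Λ^{m} ], and assume there is Λ₁ ≥ Λ₀ such that the denominator is nonzero for all Λ ≥ Λ₁. For Λ ≥ Λ₁ define A_Λ ψ(p) := 1_{(0,Λ]}(p) · [ p² ψ(p) + (m² − 1/4) ∫₀^Λ min(p,q) ψ(q) dq + (f_Λ/Λ) · p · ∫₀^Λ q ψ(q) dq ]. Then A_Λ ψ converges in L²((0,∞)) as Λ → ∞ to the function G(p) := p² ( ψ(p) − p^{−3/2−m} − κ̃ p^{−3/2+m} ) + (m² − 1/4) ∫_p^∞ (p − q)( ψ(q) − q^{−3/2−m} − κ̃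 q^{−3/2+m} ) dq, where the last integrand vanishes for q ≥ Λ₀. -/

import Mathlib

/-!
For `Λ ≥ Λ₁` the difference `A_Λ ψ - G` vanishes identically on `(0, ∞)`. Write
`χ(q) = q^(-3/2-m) + κ q^(-3/2+m)`. For `p ≤ Λ`, splitting `min p q = q - (q - p)₊` makes all
integrals of `ψ` cancel against those in `G` except the moment `∫₀^Λ q ψ`, which the
normalization turns into the explicit moment of `χ`. The exponents `s = -3/2 ± m` are the roots
of `(s + 1)(s + 2) = m² - 1/4`, so for each power `q^s` the terms nonlinear in `p` cancel; the
remaining term, linear in `p`, is exactly the one removed by the counterterm `f_Λ`. For `p > Λ`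
both sides vanish: `A_Λ ψ` by the cutoff, `G` because `ψ = χ` beyond `Λ₀`.
-/

open Filter MeasureTheory

/-- The cutoff Dirichlet Bessel operator with coupling `α = m²` plus rank-one counterterm,
`A_Λ ψ(p) = 1_{(0,Λ]}(p) [ p²ψ(p) + (m²-1/4)∫₀^Λ min(p,q)ψ(q)dq + (f_Λ/Λ) p ∫₀^Λ qψ(q)dq ]`. -/
noncomputable def cutoffBesselD (m : ℝ) (f : ℝ → ℝ) (ψ : ℝ → ℂ) (Λ : ℝ) : ℝ → ℂ :=
  fun p => Set.indicator (Set.Ioc (0:ℝ) Λ) (fun p =>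
    (p : ℂ)^2 * ψ p
      + ((m^2 - 1/4 : ℝ) : ℂ) * (∫ q in Set.Ioc (0:ℝ) Λ, ((min p q : ℝ) : ℂ) * ψ q)
      + ((f Λ / Λ : ℝ) : ℂ) * (p : ℂ) * (∫ q in Set.Ioc (0:ℝ) Λ, (q : ℂ) * ψ q)) p

/-- The running coupling constant
`f_Λ = -[(1/2-m)Λ^{-m} + κ̃(1/2+m)Λ^m] / [(1/2-m)⁻¹Λ^{-m} + κ̃(1/2+m)⁻¹Λ^m]`. -/
noncomputable def runningCouplingD (m κ : ℝ) : ℝ → ℝ :=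
  fun Λ => -(((1/2 - m) * Λ ^ (-m) + κ * (1/2 + m) * Λ ^ m) /
    ((1/2 - m)⁻¹ * Λ ^ (-m) + κ * (1/2 + m)⁻¹ * Λ ^ m))

/-- Action of the renormalized (self-adjoint) Dirichlet Bessel operator on the singular
vector `ψ` behaving like `p^{-3/2-m} + κ̃ p^{-3/2+m}` at infinity. -/
noncomputable def renormalizedActionD (m κ : ℝ) (ψ : ℝ → ℂ) : ℝ → ℂ :=
  fun p => (p : ℂ)^2 * (ψ p - ((p ^ (-3/2 - m) + κ * p ^ (-3/2 + m) : ℝ) : ℂ))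
    + ((m^2 - 1/4 : ℝ) : ℂ) *
        ∫ q in Set.Ioi p, ((p - q : ℝ) : ℂ) *
          (ψ q - ((q ^ (-3/2 - m) + κ * q ^ (-3/2 + m) : ℝ) : ℂ))

lemma integral_mul_rpow {s a b : ℝ} (hs : s + 2 ≠ 0) (ha : 0 < a) (hb : 0 < b) :
    ∫ q in a..b, q * q ^ s = (b ^ (s + 2) - a ^ (s + 2)) / (s + 2) := by
  have h0 : (0:ℝ) ∉ Set.uIcc a b := Set.notMem_uIcc_of_lt ha hb
  have hpow : ∀ q ∈ Set.uIcc a b, q * q ^ s = q ^ (s + 1) := fun q hq => by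
    rw [Real.rpow_add_one (ne_of_mem_of_not_mem hq h0), mul_comm]
  rw [intervalIntegral.integral_congr hpow, integral_rpow (Or.inr ⟨by contrapose! hs; linarith, h0⟩)]
  ring_nf

lemma sq_mul_rpow_add_integral_sub_mul_rpow {s p Λ : ℝ} (hs₁ : s + 1 ≠ 0) (hs₂ : s + 2 ≠ 0)
    (hp : 0 < p) (hΛ : 0 < Λ) :
    p ^ 2 * p ^ s + (s + 1) * (s + 2) * ∫ q in p..Λ, (p - q) * q ^ s
      = (s + 2) * p * Λ ^ (s + 1) - (s + 1) * Λ ^ (s + 2) := by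
  have h0 : (0:ℝ) ∉ Set.uIcc p Λ := Set.notMem_uIcc_of_lt hp hΛ
  have hint : IntervalIntegrable (fun q : ℝ => q ^ s) volume p Λ :=
    intervalIntegral.intervalIntegrable_rpow (Or.inr h0)
  have hsplit : ∫ q in p..Λ, (p - q) * q ^ s
      = p * (∫ q in p..Λ, q ^ s) - ∫ q in p..Λ, q * q ^ s := by
    simp_rw [sub_mul]
    rw [intervalIntegral.integral_sub (hint.const_mul p)
      (hint.continuousOn_mul (g := fun q => q) continuousOn_id), intervalIntegral.integral_const_mul]
  have hp₁ : p ^ (s + 1) = p ^ s * p := Real.rpow_add_one hp.ne' s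
  have hp₂ : p ^ (s + 2) = p ^ s * p ^ 2 := by
    rw [Real.rpow_add hp, Real.rpow_two]
  rw [hsplit, integral_rpow (r := s) (Or.inr ⟨by contrapose! hs₁; linarith, h0⟩),
    integral_mul_rpow hs₂ hp hΛ, hp₁, hp₂]
  field_simp
  ring

noncomputable def singularPart (m κ q : ℝ) : ℝ := q ^ (-3/2 - m) + κ * q ^ (-3/2 + m)

noncomputable def singularMoment (m κ Λ : ℝ) : ℝ :=
  Λ ^ (1/2 - m) / (1/2 - m) + κ * Λ ^ (1/2 + m) / (1/2 + m)

section SingularPart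

variable {m κ : ℝ}

lemma intervalIntegrable_singularPart {a b : ℝ} (ha : 0 < a) (hb : 0 < b) :
    IntervalIntegrable (singularPart m κ) volume a b := by
  have h0 : (0:ℝ) ∉ Set.uIcc a b := Set.notMem_uIcc_of_lt ha hb
  exact (intervalIntegral.intervalIntegrable_rpow (Or.inr h0)).add
    ((intervalIntegral.intervalIntegrable_rpow (Or.inr h0)).const_mul κ)

lemma integral_mul_singularPart (hm₁ : m ≠ 1/2) (hm₂ : m ≠ -1/2) {a b : ℝ} (ha : 0 < a)
    (hb : 0 < b) :
    ∫ q in a..b, q * singularPart m κ q = singularMoment m κ b - singularMoment m κ a := by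
  have h0 : (0:ℝ) ∉ Set.uIcc a b := Set.notMem_uIcc_of_lt ha hb
  have hint : ∀ s : ℝ, IntervalIntegrable (fun q : ℝ => q * q ^ s) volume a b := fun s =>
    (intervalIntegral.intervalIntegrable_rpow (Or.inr h0)).continuousOn_mul
      (g := fun q => q) continuousOn_id
  simp_rw [singularPart, mul_add, mul_left_comm _ κ]
  rw [intervalIntegral.integral_add (hint _) ((hint _).const_mul κ),
    intervalIntegral.integral_const_mul,
    integral_mul_rpow (by contrapose! hm₁; linarith) ha hb,
    integral_mul_rpow (by contrapose! hm₂; linarith) ha hb]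
  rw [show (-3/2 - m + 2 : ℝ) = 1/2 - m by ring, show (-3/2 + m + 2 : ℝ) = 1/2 + m by ring]
  unfold singularMoment
  ring

lemma sq_mul_singularPart_add_integral (hm₁ : m ≠ 1/2) (hm₂ : m ≠ -1/2) {p Λ : ℝ}
    (hp : 0 < p) (hΛ : 0 < Λ) :
    p ^ 2 * singularPart m κ p
        + (m ^ 2 - 1/4) * ((∫ q in p..Λ, (p - q) * singularPart m κ q) + singularMoment m κ Λ)
      = p * ((1/2 - m) * Λ ^ (-1/2 - m) + κ * (1/2 + m) * Λ ^ (-1/2 + m)) := by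
  have hs₁ := sq_mul_rpow_add_integral_sub_mul_rpow (s := -3/2 - m)
    (by contrapose! hm₂; linarith) (by contrapose! hm₁; linarith) hp hΛ
  have hs₂ := sq_mul_rpow_add_integral_sub_mul_rpow (s := -3/2 + m)
    (by contrapose! hm₁; linarith) (by contrapose! hm₂; linarith) hp hΛ
  have hmoment : (m ^ 2 - 1/4) * singularMoment m κ Λ
      = -((1/2 + m) * Λ ^ (1/2 - m)) - κ * (1/2 - m) * Λ ^ (1/2 + m) := by
    have c₁ : (1/2 - m) * (Λ ^ (1/2 - m) / (1/2 - m)) = Λ ^ (1/2 - m) :=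
      mul_div_cancel₀ _ (by contrapose! hm₁; linarith)
    have c₂ : (1/2 + m) * (Λ ^ (1/2 + m) / (1/2 + m)) = Λ ^ (1/2 + m) :=
      mul_div_cancel₀ _ (by contrapose! hm₂; linarith)
    unfold singularMoment
    linear_combination (-(1/2 + m)) * c₁ - κ * (1/2 - m) * c₂
  have h0 : (0:ℝ) ∉ Set.uIcc p Λ := Set.notMem_uIcc_of_lt hp hΛ
  have hint : ∀ s : ℝ, IntervalIntegrable (fun q : ℝ => (p - q) * q ^ s) volume p Λ := fun s =>
    (intervalIntegral.intervalIntegrable_rpow (Or.inr h0)).continuousOn_mul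
      (g := fun q => p - q) (continuousOn_const.sub continuousOn_id)
  simp_rw [singularPart, mul_add, mul_left_comm _ κ]
  rw [intervalIntegral.integral_add (hint _) ((hint _).const_mul κ),
    intervalIntegral.integral_const_mul]
  ring_nf at hs₁ hs₂ hmoment ⊢
  linear_combination hs₁ + κ * hs₂ + hmoment

lemma runningCouplingD_mul_singularMoment {Λ : ℝ} (hΛ : 0 < Λ)
    (hden : (1/2 - m)⁻¹ * Λ ^ (-m) + κ * (1/2 + m)⁻¹ * Λ ^ m ≠ 0) :
    runningCouplingD m κ Λ * singularMoment m κ Λ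
      = -(Λ * ((1/2 - m) * Λ ^ (-1/2 - m) + κ * (1/2 + m) * Λ ^ (-1/2 + m))) := by
  have hsplit : ∀ s : ℝ, Λ ^ (1/2 + s) = Λ ^ (1/2 : ℝ) * Λ ^ s := fun s => Real.rpow_add hΛ _ _
  have hmoment : singularMoment m κ Λ
      = Λ ^ (1/2 : ℝ) * ((1/2 - m)⁻¹ * Λ ^ (-m) + κ * (1/2 + m)⁻¹ * Λ ^ m) := by
    rw [singularMoment, sub_eq_add_neg, hsplit, hsplit]
    ring
  have hflux : Λ * ((1/2 - m) * Λ ^ (-1/2 - m) + κ * (1/2 + m) * Λ ^ (-1/2 + m))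
      = Λ ^ (1/2 : ℝ) * ((1/2 - m) * Λ ^ (-m) + κ * (1/2 + m) * Λ ^ m) := by
    have hshift : ∀ t s : ℝ, t + 1 = 1/2 + s → Λ * Λ ^ t = Λ ^ (1/2 : ℝ) * Λ ^ s :=
      fun t s hts => by rw [mul_comm, ← Real.rpow_add_one hΛ.ne', hts, hsplit]
    rw [mul_add, mul_left_comm, hshift _ (-m) (by ring), mul_left_comm Λ,
      hshift _ m (by ring)]
    ring
  rw [hmoment, hflux, runningCouplingD, mul_left_comm, neg_mul, div_mul_cancel₀ _ hden, mul_neg]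

end SingularPart

lemma intervalIntegrable_of_memLp_Ioi {E : Type*} [NormedAddCommGroup E] {f : ℝ → E}
    {r : ENNReal} (hr : 1 ≤ r) (hf : MemLp f r (volume.restrict (Set.Ioi 0))) {b : ℝ}
    (hb : 0 ≤ b) : IntervalIntegrable f volume 0 b := by
  rw [intervalIntegrable_iff_integrableOn_Ioc_of_le hb]
  have hfb := hf.restrict (Set.Ioc 0 b)
  rw [Measure.restrict_restrict_of_subset Set.Ioc_subset_Ioi_self] at hfb
  exact hfb.integrable hr

lemma integral_min_mul {ψ : ℝ → ℂ} {p Λ : ℝ} (hp : 0 ≤ p) (hpΛ : p ≤ Λ)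
    (hψ : IntervalIntegrable ψ volume 0 Λ) :
    ∫ q in 0..Λ, ((min p q : ℝ) : ℂ) * ψ q
      = (∫ q in 0..Λ, (q : ℂ) * ψ q) + ∫ q in p..Λ, ((p - q : ℝ) : ℂ) * ψ q := by
  have hweight : ∀ {a b : ℝ} {w : ℝ → ℝ}, Continuous w → IntervalIntegrable ψ volume a b →
      IntervalIntegrable (fun q => (w q : ℂ) * ψ q) volume a b := fun hw h =>
    h.continuousOn_mul (Complex.continuous_ofReal.comp hw).continuousOn
  have hψ₁ : IntervalIntegrable ψ volume 0 p :=
    hψ.mono_set (Set.uIcc_subset_uIcc_left (Set.mem_uIcc_of_le hp hpΛ))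
  have hψ₂ : IntervalIntegrable ψ volume p Λ :=
    hψ.mono_set (Set.uIcc_subset_uIcc_right (Set.mem_uIcc_of_le hp hpΛ))
  have hdiff : ∫ q in 0..Λ, ((min p q - q : ℝ) : ℂ) * ψ q
      = ∫ q in p..Λ, ((p - q : ℝ) : ℂ) * ψ q := by
    rw [← intervalIntegral.integral_add_adjacent_intervals
      (hweight (w := fun q => min p q - q) (by fun_prop) hψ₁)
      (hweight (w := fun q => min p q - q) (by fun_prop) hψ₂)]
    have hlow : ∫ q in 0..p, ((min p q - q : ℝ) : ℂ) * ψ q = 0 := by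
      rw [intervalIntegral.integral_congr (g := fun _ => (0 : ℂ)) fun q hq => by
        rw [min_eq_right (Set.uIcc_of_le hp ▸ hq).2, sub_self, Complex.ofReal_zero, zero_mul]]
      exact intervalIntegral.integral_zero
    have hhigh : ∫ q in p..Λ, ((min p q - q : ℝ) : ℂ) * ψ q
        = ∫ q in p..Λ, ((p - q : ℝ) : ℂ) * ψ q :=
      intervalIntegral.integral_congr fun q hq => by
        rw [min_eq_left (Set.uIcc_of_le hpΛ ▸ hq).1]
    rw [hlow, hhigh, zero_add]
  rw [← hdiff, ← intervalIntegral.integral_add (hweight (w := fun q => q) (by fun_prop) hψ)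
    (hweight (w := fun q => min p q - q) (by fun_prop) hψ)]
  congr 1 with q
  push_cast
  ring

section SingularVector

variable {m κ Λ₀ : ℝ} {ψ : ℝ → ℂ}

lemma integral_mul_eq_singularMoment (hm₁ : m ≠ 1/2) (hm₂ : m ≠ -1/2) (hΛ₀ : 0 < Λ₀)
    (hψ : ∀ q ≥ Λ₀, ψ q = singularPart m κ q)
    (hnorm : ∫ q in Set.Ioc 0 Λ₀, (q : ℂ) * ψ q = singularMoment m κ Λ₀) {Λ : ℝ}
    (hΛ : Λ₀ ≤ Λ) (hint : IntervalIntegrable ψ volume 0 Λ) :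
    ∫ q in 0..Λ, (q : ℂ) * ψ q = singularMoment m κ Λ := by
  have hweighted : IntervalIntegrable (fun q : ℝ => (q : ℂ) * ψ q) volume 0 Λ :=
    hint.continuousOn_mul Complex.continuous_ofReal.continuousOn
  have htail : ∫ q in Λ₀..Λ, (q : ℂ) * ψ q = ((∫ q in Λ₀..Λ, q * singularPart m κ q : ℝ) : ℂ) := by
    rw [← intervalIntegral.integral_ofReal]
    refine intervalIntegral.integral_congr fun q hq => ?_
    rw [hψ q (Set.uIcc_of_le hΛ ▸ hq).1, Complex.ofReal_mul]
  rw [← intervalIntegral.integral_add_adjacent_intervals (b := Λ₀)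
      (hweighted.mono_set (Set.uIcc_subset_uIcc_left (Set.mem_uIcc_of_le hΛ₀.le hΛ)))
      (hweighted.mono_set (Set.uIcc_subset_uIcc_right (Set.mem_uIcc_of_le hΛ₀.le hΛ))),
    intervalIntegral.integral_of_le hΛ₀.le, hnorm, htail,
    integral_mul_singularPart hm₁ hm₂ hΛ₀ (hΛ₀.trans_le hΛ)]
  push_cast
  ring

lemma renormalizedActionD_apply (p : ℝ) :
    renormalizedActionD m κ ψ p
      = (p : ℂ) ^ 2 * (ψ p - singularPart m κ p) + ((m ^ 2 - 1/4 : ℝ) : ℂ) *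
        ∫ q in Set.Ioi p, ((p - q : ℝ) : ℂ) * (ψ q - singularPart m κ q) := rfl

lemma renormalizedActionD_eq_zero (hψ : ∀ q ≥ Λ₀, ψ q = singularPart m κ q) {p : ℝ}
    (hp : Λ₀ ≤ p) : renormalizedActionD m κ ψ p = 0 := by
  have htail : ∫ q in Set.Ioi p, ((p - q : ℝ) : ℂ) * (ψ q - (singularPart m κ q : ℂ)) = 0 :=
    setIntegral_eq_zero_of_forall_eq_zero fun q hq => by
      rw [hψ q (hp.trans (le_of_lt hq)), sub_self, mul_zero]
  rw [renormalizedActionD_apply, htail, hψ p hp, sub_self, mul_zero, mul_zero, add_zero]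

lemma renormalizedActionD_eq_intervalIntegral (hψ : ∀ q ≥ Λ₀, ψ q = singularPart m κ q)
    {p Λ : ℝ} (hp : 0 < p) (hpΛ : p ≤ Λ) (hΛ : Λ₀ ≤ Λ) (hint : IntervalIntegrable ψ volume p Λ) :
    renormalizedActionD m κ ψ p
      = (p : ℂ) ^ 2 * (ψ p - singularPart m κ p) + ((m ^ 2 - 1/4 : ℝ) : ℂ) *
        ((∫ q in p..Λ, ((p - q : ℝ) : ℂ) * ψ q)
          - ((∫ q in p..Λ, (p - q) * singularPart m κ q : ℝ) : ℂ)) := by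
  have hψw : IntervalIntegrable (fun q => ((p - q : ℝ) : ℂ) * ψ q) volume p Λ :=
    hint.continuousOn_mul (by fun_prop)
  have hχw : IntervalIntegrable (fun q => (p - q) * singularPart m κ q) volume p Λ :=
    (intervalIntegrable_singularPart hp (hp.trans_le hpΛ)).continuousOn_mul
      (g := fun q => p - q) (by fun_prop)
  have htrunc : ∫ q in Set.Ioi p, ((p - q : ℝ) : ℂ) * (ψ q - (singularPart m κ q : ℂ))
      = ∫ q in p..Λ, ((p - q : ℝ) : ℂ) * ψ q - (((p - q) * singularPart m κ q : ℝ) : ℂ) := by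
    rw [intervalIntegral.integral_of_le hpΛ,
      setIntegral_eq_of_subset_of_forall_sdiff_eq_zero measurableSet_Ioi Set.Ioc_subset_Ioi_self
        fun q hq => by
          rw [hψ q (hΛ.trans (not_le.1 fun h => hq.2 ⟨hq.1, h⟩).le), sub_self, mul_zero]]
    exact setIntegral_congr_fun measurableSet_Ioc fun q _ => by push_cast; ring
  have hχw' : IntervalIntegrable (fun q => (((p - q) * singularPart m κ q : ℝ) : ℂ)) volume p Λ :=
    ⟨hχw.1.ofReal, hχw.2.ofReal⟩
  rw [renormalizedActionD_apply, htrunc, intervalIntegral.integral_sub hψw hχw',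
    intervalIntegral.integral_ofReal]

theorem cutoffBesselD_eq_renormalizedActionD (hm₁ : m ≠ 1/2) (hm₂ : m ≠ -1/2) (hΛ₀ : 0 < Λ₀)
    (hψL2 : MemLp ψ 2 (volume.restrict (Set.Ioi 0))) (hψ : ∀ q ≥ Λ₀, ψ q = singularPart m κ q)
    (hnorm : ∫ q in Set.Ioc 0 Λ₀, (q : ℂ) * ψ q = singularMoment m κ Λ₀) {Λ : ℝ} (hΛ : Λ₀ ≤ Λ)
    (hden : (1/2 - m)⁻¹ * Λ ^ (-m) + κ * (1/2 + m)⁻¹ * Λ ^ m ≠ 0) {p : ℝ} (hp : 0 < p) :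
    cutoffBesselD m (runningCouplingD m κ) ψ Λ p = renormalizedActionD m κ ψ p := by
  simp only [cutoffBesselD]
  by_cases hpΛ : p ≤ Λ
  swap
  · rw [Set.indicator_of_notMem fun h => hpΛ h.2,
      renormalizedActionD_eq_zero hψ (hΛ.trans (not_le.1 hpΛ).le)]
  have hΛpos : 0 < Λ := hp.trans_le hpΛ
  have hint := intervalIntegrable_of_memLp_Ioi one_le_two hψL2 hΛpos.le
  have hcounterterm : runningCouplingD m κ Λ / Λ * p * singularMoment m κ Λ
      = -(p * ((1/2 - m) * Λ ^ (-1/2 - m) + κ * (1/2 + m) * Λ ^ (-1/2 + m))) := by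
    rw [show runningCouplingD m κ Λ / Λ * p * singularMoment m κ Λ
        = p * (runningCouplingD m κ Λ * singularMoment m κ Λ) / Λ by ring,
      runningCouplingD_mul_singularMoment hΛpos hden]
    field_simp
  have hreal : p ^ 2 * singularPart m κ p
      + (m ^ 2 - 1/4) * ((∫ q in p..Λ, (p - q) * singularPart m κ q) + singularMoment m κ Λ)
      + runningCouplingD m κ Λ / Λ * p * singularMoment m κ Λ = 0 := by
    rw [sq_mul_singularPart_add_integral hm₁ hm₂ hp hΛpos, hcounterterm, add_neg_cancel]
  rw [Set.indicator_of_mem (Set.mem_Ioc.2 ⟨hp, hpΛ⟩), ← intervalIntegral.integral_of_le hΛpos.le,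
    ← intervalIntegral.integral_of_le hΛpos.le, integral_min_mul hp.le hpΛ hint,
    integral_mul_eq_singularMoment hm₁ hm₂ hΛ₀ hψ hnorm hΛ hint,
    renormalizedActionD_eq_intervalIntegral hψ hp hpΛ hΛ
      (hint.mono_set (Set.uIcc_subset_uIcc_right (Set.mem_uIcc_of_le hp.le hpΛ)))]
  have hcomplex := congrArg ((↑) : ℝ → ℂ) hreal
  push_cast at hcomplex ⊢
  linear_combination hcomplex

end SingularVector

theorem cutoff_besselD_converges_on_singular_vector_general
    (m κ Λ₀ : ℝ) (hm1 : m ≠ 1/2) (hm2 : m ≠ -1/2)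
    (hΛ₀ : 0 < Λ₀) (ψ : ℝ → ℂ)
    (hψL2 : MemLp ψ 2 (volume.restrict (Set.Ioi 0)))
    (hψ : ∀ p ≥ Λ₀, ψ p = ((p ^ (-3/2 - m) + κ * p ^ (-3/2 + m) : ℝ) : ℂ))
    (hnorm : ∫ q in Set.Ioc (0:ℝ) Λ₀, (q : ℂ) * ψ q
      = ((Λ₀ ^ (1/2 - m) / (1/2 - m) + κ * Λ₀ ^ (1/2 + m) / (1/2 + m) : ℝ) : ℂ))
    (Λ₁ : ℝ) (hΛ₁ : Λ₀ ≤ Λ₁)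
    (hden : ∀ Λ ≥ Λ₁, (1/2 - m)⁻¹ * Λ ^ (-m) + κ * (1/2 + m)⁻¹ * Λ ^ m ≠ 0) :
    Tendsto (fun Λ : ℝ =>
        eLpNorm (fun p => cutoffBesselD m (runningCouplingD m κ) ψ Λ p
            - renormalizedActionD m κ ψ p) 2
          (volume.restrict (Set.Ioi 0)))
      atTop (nhds 0) := by
  refine tendsto_const_nhds.congr' ?_
  filter_upwards [eventually_ge_atTop Λ₁] with Λ hΛ
  refine (eLpNorm_eq_zero_of_ae_zero ?_).symm
  filter_upwards [ae_restrict_mem measurableSet_Ioi] with p hp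
  exact sub_eq_zero.2 <| cutoffBesselD_eq_renormalizedActionD hm1 hm2 hΛ₀ hψL2 hψ hnorm
    (hΛ₁.trans hΛ) (hden Λ hΛ) hp

/-- "Physicists' style" renormalization: with the running coupling `f_Λ` solving the RG
flow, the cutoff Dirichlet Bessel operators applied to the singular vector `ψ` converge
in `L²((0,∞))` to the action of the corresponding self-adjoint realization. -/
theorem cutoff_besselD_converges_on_singular_vector
    (m κ Λ₀ : ℝ) (hm : m ∈ Set.Ioo (-1:ℝ) 1) (hm1 : m ≠ 1/2) (hm2 : m ≠ -1/2)
    (hΛ₀ : 0 < Λ₀) (ψ : ℝ → ℂ)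
    (hψL2 : MemLp ψ 2 (volume.restrict (Set.Ioi 0)))
    (hψ : ∀ p ≥ Λ₀, ψ p = ((p ^ (-3/2 - m) + κ * p ^ (-3/2 + m) : ℝ) : ℂ))
    (hnorm : ∫ q in Set.Ioc (0:ℝ) Λ₀, (q : ℂ) * ψ q
      = ((Λ₀ ^ (1/2 - m) / (1/2 - m) + κ * Λ₀ ^ (1/2 + m) / (1/2 + m) : ℝ) : ℂ))
    (Λ₁ : ℝ) (hΛ₁ : Λ₀ ≤ Λ₁)
    (hden : ∀ Λ ≥ Λ₁, (1/2 - m)⁻¹ * Λ ^ (-m) + κ * (1/2 + m)⁻¹ * Λ ^ m ≠ 0) :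
    Tendsto (fun Λ : ℝ =>
        eLpNorm (fun p => cutoffBesselD m (runningCouplingD m κ) ψ Λ p
            - renormalizedActionD m κ ψ p) 2
          (volume.restrict (Set.Ioi 0)))
      atTop (nhds 0) :=
  cutoff_besselD_converges_on_singular_vector_general m κ Λ₀ hm1 hm2 hΛ₀ ψ hψL2 hψ hnorm Λ₁ hΛ₁ hden
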